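/- arXiv:1811.01857 — 2 statements merged into one kernel-verified Lean document; each statement's English description precedes it below -/
import Mathlib

section
/- For a closed subset F of ℂ, the isolated points of the boundary of acc F coincide with the isolated points of acc F, i.e., iso(∂(acc F)) = iso(acc F). -/
open Filter Topology Set

/-- Accumulation points of a set in ℂ. -/
def acc (S : Set ℂ) : Set ℂ := {z | AccPt z (𝓟 S)}
/-- Isolated points of a set in ℂ. -/
def iso (S : Set ℂ) : Set ℂ := {z | z ∈ S ∧ ¬ AccPt z (𝓟 S)}
/-- Polynomially convex hull: K together with the bounded connected components of ℂ \ K. -/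
def polyHull (K : Set ℂ) : Set ℂ :=
  K ∪ {z | z ∉ K ∧ Bornology.IsBounded (connectedComponentIn Kᶜ z)}

lemma rank_lt : (1 : Cardinal) < Module.rank ℝ ℂ := by
  rw [Complex.rank_real_complex]; exact Nat.one_lt_ofNat

/-- A punctured ball in ℂ is preconnected. -/
lemma isPreconnected_punctured_ball (z : ℂ) (r : ℝ) :
    IsPreconnected (Metric.ball z r \ {z}) := by
  rcases le_or_gt r 0 with hr | hr
  · convert isPreconnected_empty
    rw [Metric.ball_eq_empty.mpr hr, Set.empty_diff]
  · have hS : IsPreconnected ((Set.Ioo (0 : ℝ) r) ×ˢ Metric.sphere z 1) :=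
      isPreconnected_Ioo.prod (isConnected_sphere rank_lt z zero_le_one).isPreconnected
    have hcont : ContinuousOn (fun p : ℝ × ℂ => z + p.1 • (p.2 - z))
        ((Set.Ioo (0 : ℝ) r) ×ˢ Metric.sphere z 1) := by fun_prop
    have himg : (fun p : ℝ × ℂ => z + p.1 • (p.2 - z)) ''
        ((Set.Ioo (0 : ℝ) r) ×ˢ Metric.sphere z 1) = Metric.ball z r \ {z} := by
      ext x
      constructor
      · rintro ⟨⟨t, u⟩, ⟨⟨ht0, htr⟩, hu⟩, rfl⟩
        have hd : dist (z + t • (u - z)) z = t := by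
          rw [dist_eq_norm]
          simp only [add_sub_cancel_left]
          rw [norm_smul]
          rw [mem_sphere_iff_norm] at hu
          simp [hu, abs_of_pos ht0]
        constructor
        · rw [Metric.mem_ball, hd]; exact htr
        · simp only [Set.mem_singleton_iff]
          intro h
          rw [h, dist_self] at hd
          exact absurd hd.symm (ne_of_gt ht0)
      · rintro ⟨hx, hxz⟩
        simp only [Set.mem_singleton_iff] at hxz
        set t : ℝ := dist x z with ht
        have ht0 : 0 < t := dist_pos.mpr hxz
        refine ⟨⟨t, z + t⁻¹ • (x - z)⟩, ⟨⟨ht0, Metric.mem_ball.mp hx⟩, ?_⟩, ?_⟩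
        · rw [mem_sphere_iff_norm]
          simp only [add_sub_cancel_left]
          rw [norm_smul, norm_inv, Real.norm_eq_abs, abs_of_pos ht0]
          rw [dist_eq_norm] at ht
          rw [← ht]
          exact inv_mul_cancel₀ (ne_of_gt ht0)
        · simp only [add_sub_cancel_left, smul_smul]
          rw [mul_inv_cancel₀ (ne_of_gt ht0), one_smul]
          ring
    rw [← himg]
    exact hS.image _ hcont

theorem iso_frontier_acc (F : Set ℂ) (hF : IsClosed F) :
    iso (frontier (acc F)) = iso (acc F) := by
  have hA : IsClosed (acc F) := isClosed_derivedSet F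
  set A := acc F with hAdef
  have hfA : frontier A ⊆ A := hA.frontier_subset
  ext z
  constructor
  · rintro ⟨hzB, hzn⟩
    refine ⟨hfA hzB, fun hacc => ?_⟩
    -- z is isolated in ∂A but an accumulation point of A: contradiction
    rw [accPt_iff_nhds] at hzn
    push_neg at hzn
    obtain ⟨U, hU, hUiso⟩ := hzn
    obtain ⟨r, hr0, hrU⟩ := Metric.mem_nhds_iff.mp hU
    -- get a point of A in the punctured ball
    obtain ⟨w, ⟨hwb, hwA⟩, hwz⟩ := accPt_iff_nhds.mp hacc (Metric.ball z r)
      (Metric.ball_mem_nhds z hr0)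
    -- get a point of Aᶜ in the punctured ball
    have hzc : z ∈ closure Aᶜ := by
      rw [frontier_eq_closure_inter_closure] at hzB
      exact hzB.2
    obtain ⟨v, hvc, hvd⟩ := Metric.mem_closure_iff.mp hzc r hr0
    have hvb : v ∈ Metric.ball z r := Metric.mem_ball'.mpr hvd
    have hvz : v ≠ z := fun h => hvc (h ▸ hfA hzB)
    -- the punctured ball is covered by interior A and Aᶜ
    have hP : IsPreconnected (Metric.ball z r \ {z}) := isPreconnected_punctured_ball z r
    have hcover : Metric.ball z r \ {z} ⊆ interior A ∪ Aᶜ := by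
      rintro x ⟨hxb, hxz⟩
      by_cases hxA : x ∈ A
      · left
        by_contra hxi
        have hxf : x ∈ frontier A := by
          rw [hA.frontier_eq]
          exact ⟨hxA, hxi⟩
        exact hxz (hUiso x ⟨hrU hxb, hxf⟩)
      · right; exact hxA
    have hwint : w ∈ interior A := by
      rcases hcover ⟨hwb, hwz⟩ with h | h
      · exact h
      · exact absurd hwA h
    obtain ⟨y, _, hy1, hy2⟩ := hP (interior A) Aᶜ isOpen_interior hA.isOpen_compl hcover
      ⟨w, ⟨hwb, hwz⟩, hwint⟩ ⟨v, ⟨hvb, hvz⟩, hvc⟩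
    exact hy2 (interior_subset hy1)
  · rintro ⟨hzA, hzn⟩
    have hznf : ¬ AccPt z (𝓟 (frontier A)) := fun h =>
      hzn (h.mono (principal_mono.mpr hfA))
    refine ⟨?_, hznf⟩
    rw [frontier_eq_closure_inter_closure]
    refine ⟨subset_closure hzA, ?_⟩
    -- z is in the closure of Aᶜ: near z, A has only z itself
    rw [accPt_iff_nhds] at hzn
    push_neg at hzn
    obtain ⟨V, hV, hViso⟩ := hzn
    rw [mem_closure_iff_nhds]
    intro U hU
    have : ∃ y ∈ U ∩ V, y ≠ z := by
      have hne : (𝓝[≠] z).NeBot := by infer_instance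
      have := hne.nonempty_of_mem (inter_mem_nhdsWithin _ (inter_mem hU hV))
      obtain ⟨y, hy1, hy2⟩ := this
      exact ⟨y, hy2, hy1⟩
    obtain ⟨y, ⟨hyU, hyV⟩, hyz⟩ := this
    refine ⟨y, hyU, fun hyA => hyz (hViso y ⟨hyV, hyA⟩)⟩
end

section
/- Let E be a compact subset of ℂ and λ an isolated point of ∂(acc E) (the boundary of the set of accumulation points of E). Then λ is an isolated point of acc E, and there exists a sequence of isolated points of E converging to λ with all terms distinct from λ; in particular λ ∈ acc(iso E). -/
open Filter Topology Set

lemma isClosed_acc (S : Set ℂ) : IsClosed (acc S) := isClosed_derivedSet S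

lemma isPreconnected_ball_diff_singleton (l : ℂ) (r : ℝ) :
    IsPreconnected (Metric.ball l r \ {l}) := by
  rcases le_or_gt r 0 with hr | hr
  · rw [Metric.ball_eq_empty.2 hr, Set.empty_diff]
    exact isPreconnected_empty
  have hrank : 1 < Module.rank ℝ ℂ := by rw [Complex.rank_real_complex]; norm_num
  have h1 : IsPreconnected ((Set.Ioo (0:ℝ) r) ×ˢ (Metric.sphere (0:ℂ) 1)) :=
    isPreconnected_Ioo.prod (isPreconnected_sphere hrank 0 1)
  have hcont : Continuous (fun p : ℝ × ℂ => l + p.1 • p.2) := by continuity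
  have h2 := h1.image _ hcont.continuousOn
  have heq : (fun p : ℝ × ℂ => l + p.1 • p.2) '' ((Set.Ioo (0:ℝ) r) ×ˢ (Metric.sphere (0:ℂ) 1))
      = Metric.ball l r \ {l} := by
    ext z
    constructor
    · rintro ⟨⟨s, v⟩, ⟨⟨hs0, hsr⟩, hv⟩, rfl⟩
      simp only [Metric.mem_sphere, dist_zero_right] at hv
      have hd : dist (l + s • v) l = s := by
        rw [dist_eq_norm]
        simp [norm_smul, hv, abs_of_pos hs0]
      constructor
      · rw [Metric.mem_ball, hd]; exact hsr
      · simp only [Set.mem_singleton_iff]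
        intro h
        rw [h] at hd
        simp at hd
        exact hs0.ne' hd.symm
    · rintro ⟨hz, hzl⟩
      simp only [Set.mem_singleton_iff] at hzl
      have hne : z - l ≠ 0 := sub_ne_zero.2 hzl
      have hnorm : ‖z - l‖ ≠ 0 := norm_ne_zero_iff.2 hne
      refine ⟨⟨‖z - l‖, ‖z - l‖⁻¹ • (z - l)⟩, ⟨⟨?_, ?_⟩, ?_⟩, ?_⟩
      · positivity
      · rw [Metric.mem_ball, dist_eq_norm] at hz; exact hz
      · rw [Metric.mem_sphere, dist_zero_right, norm_smul, norm_inv, norm_norm,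
          inv_mul_cancel₀ hnorm]
      · simp only [smul_smul]
        rw [mul_inv_cancel₀ hnorm, one_smul]
        ring
  rw [heq] at h2
  exact h2

theorem iso_frontier_acc_mem (E : Set ℂ) (hE : IsCompact E) (l : ℂ)
    (hl : l ∈ iso (frontier (acc E))) :
    l ∈ iso (acc E) ∧
      (∃ u : ℕ → ℂ, (∀ n, u n ∈ iso E ∧ u n ≠ l) ∧ Filter.Tendsto u Filter.atTop (nhds l)) ∧
      l ∈ acc (iso E) := by
  obtain ⟨hlf, hlni⟩ := hl
  have hclosed : IsClosed (acc E) := isClosed_acc E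
  have hlacc : l ∈ acc E := hclosed.frontier_subset hlf
  have hlnotint : l ∉ interior (acc E) := fun h => hlf.2 h
  -- extract a radius
  rw [accPt_iff_nhds] at hlni
  push_neg at hlni
  obtain ⟨U, hU, hU2⟩ := hlni
  obtain ⟨r, hr, hrU⟩ := Metric.mem_nhds_iff.1 hU
  have hball : ∀ y ∈ Metric.ball l r ∩ frontier (acc E), y = l :=
    fun y hy => hU2 y ⟨hrU hy.1, hy.2⟩
  -- key: punctured ball misses acc E
  have key : ∀ z ∈ Metric.ball l r \ {l}, z ∉ acc E := by
    have hsub : Metric.ball l r \ {l} ⊆ interior (acc E) ∪ (acc E)ᶜ := by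
      rintro z ⟨hz1, hz2⟩
      simp only [Set.mem_singleton_iff] at hz2
      by_cases hz : z ∈ acc E
      · by_cases hzi : z ∈ interior (acc E)
        · exact Or.inl hzi
        · exact absurd (hball z ⟨hz1, ⟨hclosed.closure_eq.symm ▸ hz, hzi⟩⟩) hz2
      · exact Or.inr hz
    have hdisj : Disjoint (interior (acc E)) ((acc E)ᶜ) :=
      disjoint_compl_right.mono_left interior_subset
    rcases (isPreconnected_ball_diff_singleton l r).subset_or_subset isOpen_interior
      hclosed.isOpen_compl hdisj hsub with h | h
    · exfalso
      apply hlnotint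
      have hball_sub : Metric.ball l r ⊆ acc E := by
        intro z hz
        by_cases hzl : z = l
        · exact hzl ▸ hlacc
        · exact interior_subset (h ⟨hz, hzl⟩)
      exact mem_interior.2 ⟨Metric.ball l r, hball_sub, Metric.isOpen_ball,
        Metric.mem_ball_self hr⟩
    · exact fun z hz => h hz
  -- l isolated in acc E
  have hiso_acc : l ∈ iso (acc E) := by
    refine ⟨hlacc, fun hacc => ?_⟩
    rw [accPt_iff_nhds] at hacc
    obtain ⟨y, ⟨hy1, hy2⟩, hy3⟩ := hacc (Metric.ball l r) (Metric.ball_mem_nhds _ hr)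
    exact key y ⟨hy1, hy3⟩ hy2
  -- sequence
  have hlaccE : AccPt l (𝓟 E) := hlacc
  rw [accPt_iff_nhds] at hlaccE
  have H : ∀ n : ℕ, ∃ y, y ∈ Metric.ball l (min r (1/(n+1))) ∩ E ∧ y ≠ l := fun n =>
    hlaccE _ (Metric.ball_mem_nhds _ (lt_min hr (by positivity)))
  choose u hu hune using H
  have huiso : ∀ n, u n ∈ iso E ∧ u n ≠ l := by
    intro n
    have hb : u n ∈ Metric.ball l r := Metric.ball_subset_ball (min_le_left _ _) (hu n).1
    have : u n ∉ acc E := key _ ⟨hb, hune n⟩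
    exact ⟨⟨(hu n).2, this⟩, hune n⟩
  have htend : Tendsto u atTop (𝓝 l) := by
    rw [tendsto_iff_dist_tendsto_zero]
    apply squeeze_zero (fun n => dist_nonneg)
      (fun n => le_of_lt (lt_of_lt_of_le (Metric.mem_ball.1 (hu n).1) (min_le_right _ _)))
    exact tendsto_one_div_add_atTop_nhds_zero_nat
  refine ⟨hiso_acc, ⟨u, huiso, htend⟩, ?_⟩
  show AccPt l (𝓟 (iso E))
  rw [accPt_iff_nhds]
  intro U hU
  obtain ⟨n, hn⟩ := (htend.eventually (eventually_mem_nhds_iff.mpr hU)).exists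
  exact ⟨u n, ⟨mem_of_mem_nhds hn, (huiso n).1⟩, (huiso n).2⟩
end
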